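/- arXiv:2305.03946 — 7 statements merged into one kernel-verified Lean document; each statement's English description precedes it below -/
import Mathlib

section
/- Let r > 0, let a be a real number with 0 < a ≤ r/2, and let a' be a real number with 0 ≤ a' ≤ a/2. Place the station p at the origin (0,0) of the Euclidean plane and a sensor s at the point (a, 0). Then every point t ∈ ℝ² satisfying ‖t‖ ≤ r + a' and t·(1,0) ≥ (13/20)·‖t‖ (i.e., the angle between t and the positive x-axis is at most arccos(13/20)) satisfies dist(t, s) ≤ r or dist(t, p) ≤ r. In other words, the interval of angles [−arccos(13/20), arccos(13/20)] is covered at radius a' by the sensor at (a,0) together with a sensor at the station. -/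
/-!
The sensor at `(a, 0)` alone covers the sector. Writing `n = ‖t‖`, the angle condition gives
`dist(t, s)² = n² - 2⟪t, s⟫ + a² ≤ n² - (13/10)·a·n + a²`, a convex function of `n`, so on
`0 ≤ n ≤ r + a/2` it is largest at an endpoint: at `n = 0` it is `a² ≤ r²`, and at `n = r + a/2`
it is `r² - (3/10)·a·(r - 2a) ≤ r²` because `a ≤ r/2`. With `a = r/2` the second endpoint shows
that `13/20` is the smallest cosine for which this works.
-/

open EuclideanSpace

open scoped RealInnerProductSpace

theorem dist_le_of_norm_le_of_inner_ge {E : Type*} [NormedAddCommGroup E] [InnerProductSpace ℝ E]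
    {r : ℝ} {s t : E} (hs : ‖s‖ ≤ r / 2) (ht : ‖t‖ ≤ r + ‖s‖ / 2)
    (hangle : 13 / 20 * (‖t‖ * ‖s‖) ≤ ⟪t, s⟫) : dist t s ≤ r := by
  have hr : 0 ≤ r := by linarith [norm_nonneg s]
  have hsq : ‖t - s‖ ^ 2 ≤ r ^ 2 := by
    rw [norm_sub_sq_real]
    nlinarith [mul_nonneg (sub_nonneg.2 ht)
      (by linarith [norm_nonneg t] : 0 ≤ r + ‖s‖ / 2 + ‖t‖ - 13 / 10 * ‖s‖), norm_nonneg s]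
  rw [dist_eq_norm]
  exact (pow_le_pow_iff_left₀ (norm_nonneg _) hr two_ne_zero).1 hsq

theorem stmt_0_general (r a a' : ℝ) (ha : 0 < a) (har : a ≤ r / 2)
    (ha'a : a' ≤ a / 2)
    (p s : EuclideanSpace ℝ (Fin 2))
    (hs : s = !₂[a, 0]) :
    ∀ t : EuclideanSpace ℝ (Fin 2),
      ‖t‖ ≤ r + a' → (13 / 20 : ℝ) * ‖t‖ ≤ t 0 →
      dist t s ≤ r ∨ dist t p ≤ r := by
  intro t hnorm hangle
  have hs_norm : ‖s‖ = a := by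
    simp [hs, EuclideanSpace.norm_eq, Fin.sum_univ_two, Real.sqrt_sq ha.le]
  have hs_inner : ⟪t, s⟫ = a * t 0 := by
    simp [hs, PiLp.inner_apply, Fin.sum_univ_two]
  left
  apply dist_le_of_norm_le_of_inner_ge (by rwa [hs_norm])
  · rw [hs_norm]; linarith
  · rw [hs_norm, hs_inner]; nlinarith

theorem stmt_0 (r a a' : ℝ) (hr : 0 < r) (ha : 0 < a) (har : a ≤ r / 2)
    (ha' : 0 ≤ a') (ha'a : a' ≤ a / 2)
    (p s : EuclideanSpace ℝ (Fin 2))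
    (hp : p = !₂[0, 0]) (hs : s = !₂[a, 0]) :
    ∀ t : EuclideanSpace ℝ (Fin 2),
      ‖t‖ ≤ r + a' → (13 / 20 : ℝ) * ‖t‖ ≤ t 0 →
      dist t s ≤ r ∨ dist t p ≤ r :=
  stmt_0_general r a a' ha har ha'a p s hs
end

section
/- Let r > 0, let a satisfy 0 < a ≤ r/2, and let δ satisfy 0 < δ ≤ a/4. Define the points t₂ = (a/2, −√(4r² − a²)/2) and t₁ = ((δ² + 2rδ + a²)/(2a), √(((2r + δ)² − a²)(a² − δ²))/(2a)) in ℝ². Then every point q ∈ ℝ² with dist(q, t₁) ≤ r and dist(q, t₂) ≤ r satisfies ‖q‖ > 2δ. -/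
/-!
Adding the two conditions `dist q tᵢ ≤ r` and using `‖t₁‖ = r + δ`, `‖t₂‖ = r` gives
`‖q‖² + rδ + δ²/2 ≤ ⟪q, t₁ + t₂⟫ ≤ ‖q‖ ‖t₁ + t₂‖`. On `0 < n ≤ 2δ` the function
`n + (rδ + δ²/2) / n` is decreasing (as `r ≥ 4δ`), with minimum `r/2 + 9δ/4` at `n = 2δ`, so it
suffices that `‖t₁ + t₂‖ < r/2 + 9δ/4`; squaring out the square roots in the coordinates of
`t₁ + t₂` turns this into a polynomial inequality.
-/

open Real RealInnerProductSpace

section InnerProductSpace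

variable {E : Type*} [NormedAddCommGroup E] [InnerProductSpace ℝ E] {q t₁ t₂ : E} {r δ : ℝ}

theorem two_mul_norm_sq_add_le_inner_add (h₁ : dist q t₁ ≤ r) (h₂ : dist q t₂ ≤ r) :
    2 * ‖q‖ ^ 2 + ‖t₁‖ ^ 2 + ‖t₂‖ ^ 2 ≤ 2 * r ^ 2 + 2 * ⟪q, t₁ + t₂⟫ := by
  have hq₁ : ‖q - t₁‖ ^ 2 ≤ r ^ 2 := by
    rw [← dist_eq_norm]; exact pow_le_pow_left₀ dist_nonneg h₁ 2
  have hq₂ : ‖q - t₂‖ ^ 2 ≤ r ^ 2 := by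
    rw [← dist_eq_norm]; exact pow_le_pow_left₀ dist_nonneg h₂ 2
  rw [norm_sub_sq_real] at hq₁ hq₂
  rw [inner_add_right]
  linarith

theorem lt_norm_of_dist_le_of_norm_add_lt (hδ : 0 < δ) (hδr : 4 * δ ≤ r)
    (h₁ : dist q t₁ ≤ r) (h₂ : dist q t₂ ≤ r) (ht₁ : ‖t₁‖ = r + δ) (ht₂ : ‖t₂‖ = r)
    (hsum : ‖t₁ + t₂‖ < r / 2 + 9 * δ / 4) :
    2 * δ < ‖q‖ := by
  have hlens := two_mul_norm_sq_add_le_inner_add h₁ h₂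
  have hcs := real_inner_le_norm q (t₁ + t₂)
  rw [ht₁, ht₂] at hlens
  by_contra! hq
  rcases (norm_nonneg q).eq_or_lt with hq0 | hqpos
  · rw [← hq0] at hlens hcs
    nlinarith
  · nlinarith [mul_lt_mul_of_pos_left hsum hqpos,
      mul_nonneg (sub_nonneg.2 hq) (by linarith : 0 ≤ r / 2 + δ / 4 - ‖q‖)]

end InnerProductSpace

theorem EuclideanSpace.norm_sq_of_ofLp_eq {t : EuclideanSpace ℝ (Fin 2)} {x y : ℝ}
    (h : t.ofLp = ![x, y]) : ‖t‖ ^ 2 = x ^ 2 + y ^ 2 := by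
  simp [EuclideanSpace.norm_sq_eq, h, Fin.sum_univ_two]

theorem EuclideanSpace.ofLp_add_of_ofLp_eq {t₁ t₂ : EuclideanSpace ℝ (Fin 2)} {x₁ y₁ x₂ y₂ : ℝ}
    (h₁ : t₁.ofLp = ![x₁, y₁]) (h₂ : t₂.ofLp = ![x₂, y₂]) :
    (t₁ + t₂).ofLp = ![x₁ + x₂, y₁ + y₂] := by
  simp [h₁, h₂]

/-- In the variables `r - 2a`, `a - 4δ` and `δ`, the difference of the two sides is a polynomial
with positive coefficients. -/
theorem lens_polynomial_lt {r a δ : ℝ} (hδ : 0 < δ) (hδa : δ ≤ a / 4) (har : a ≤ r / 2) :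
    a ^ 2 * (28 * r ^ 2 + 12 * r * δ + 8 * a ^ 2 - 57 * δ ^ 2) ^ 2
      < 64 * (4 * r ^ 2 - a ^ 2) * ((2 * r + δ) ^ 2 - a ^ 2) * (a ^ 2 - δ ^ 2) := by
  obtain ⟨s, hs, rfl⟩ : ∃ s, 0 ≤ s ∧ r = s + 2 * a := ⟨r - 2 * a, by linarith, by ring⟩
  obtain ⟨t, ht, rfl⟩ : ∃ t, 0 ≤ t ∧ a = t + 4 * δ := ⟨a - 4 * δ, by linarith, by ring⟩
  rw [← sub_pos]
  ring_nf
  positivity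

section Intersections

variable {r a δ : ℝ} {t₁ t₂ : EuclideanSpace ℝ (Fin 2)}

theorem norm_eq_of_ofLp_eq_lower_intersection (ha : 0 ≤ a) (har : a ≤ 2 * r)
    (h : t₂.ofLp = ![a / 2, -√(4 * r ^ 2 - a ^ 2) / 2]) : ‖t₂‖ = r := by
  have hsq := EuclideanSpace.norm_sq_of_ofLp_eq h
  rw [div_pow, div_pow, neg_sq, sq_sqrt (by nlinarith)] at hsq
  exact (sq_eq_sq₀ (norm_nonneg _) (by linarith)).1 (by rw [hsq]; ring)

theorem norm_eq_of_ofLp_eq_upper_intersection (ha : 0 < a) (hδ : 0 ≤ δ) (hδa : δ ≤ a)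
    (har : a ≤ 2 * r + δ)
    (h : t₁.ofLp = ![(δ ^ 2 + 2 * r * δ + a ^ 2) / (2 * a),
        √(((2 * r + δ) ^ 2 - a ^ 2) * (a ^ 2 - δ ^ 2)) / (2 * a)]) : ‖t₁‖ = r + δ := by
  have hsq := EuclideanSpace.norm_sq_of_ofLp_eq h
  rw [div_pow, div_pow, sq_sqrt (mul_nonneg (by nlinarith) (by nlinarith))] at hsq
  exact (sq_eq_sq₀ (norm_nonneg _) (by linarith)).1 (by rw [hsq]; field_simp; ring)

theorem norm_add_lt_of_ofLp_eq_intersections (hδ : 0 < δ) (hδa : δ ≤ a / 4) (har : a ≤ r / 2)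
    (h₁ : t₁.ofLp = ![(δ ^ 2 + 2 * r * δ + a ^ 2) / (2 * a),
        √(((2 * r + δ) ^ 2 - a ^ 2) * (a ^ 2 - δ ^ 2)) / (2 * a)])
    (h₂ : t₂.ofLp = ![a / 2, -√(4 * r ^ 2 - a ^ 2) / 2]) :
    ‖t₁ + t₂‖ < r / 2 + 9 * δ / 4 := by
  have ha : 0 < a := by linarith
  set s₁ := √(4 * r ^ 2 - a ^ 2)
  set s₂ := √(((2 * r + δ) ^ 2 - a ^ 2) * (a ^ 2 - δ ^ 2))
  have hs₁sq : s₁ ^ 2 = 4 * r ^ 2 - a ^ 2 := sq_sqrt (by nlinarith)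
  have hs₂sq : s₂ ^ 2 = ((2 * r + δ) ^ 2 - a ^ 2) * (a ^ 2 - δ ^ 2) :=
    sq_sqrt (mul_nonneg (by nlinarith) (by nlinarith))
  have hprod : a * (28 * r ^ 2 + 12 * r * δ + 8 * a ^ 2 - 57 * δ ^ 2) < 8 * (s₁ * s₂) := by
    refine lt_of_pow_lt_pow_left₀ 2 (by positivity) ?_
    rw [show (8 * (s₁ * s₂)) ^ 2 = 64 * s₁ ^ 2 * s₂ ^ 2 by ring, hs₁sq, hs₂sq, mul_pow]
    linarith [lens_polynomial_lt hδ hδa har]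
  have hsq := EuclideanSpace.norm_sq_of_ofLp_eq (EuclideanSpace.ofLp_add_of_ofLp_eq h₁ h₂)
  have hsq' : ‖t₁ + t₂‖ ^ 2 * (4 * a ^ 2)
      = (δ ^ 2 + 2 * r * δ + 2 * a ^ 2) ^ 2 + (s₂ - a * s₁) ^ 2 := by
    rw [hsq]; field_simp; ring
  refine lt_of_pow_lt_pow_left₀ 2 (by linarith) ?_
  refine lt_of_mul_lt_mul_right (a := 4 * a ^ 2) ?_ (by positivity)
  rw [hsq', sub_sq, hs₂sq, mul_pow, hs₁sq]
  linarith [mul_lt_mul_of_pos_left hprod ha]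

end Intersections

theorem stmt_2_general (r a δ : ℝ) (har : a ≤ r / 2)
    (hδ : 0 < δ) (hδa : δ ≤ a / 4)
    (t₁ t₂ : EuclideanSpace ℝ (Fin 2))
    (ht₂ : t₂ = ![a / 2, -Real.sqrt (4 * r ^ 2 - a ^ 2) / 2])
    (ht₁ : t₁ = ![(δ ^ 2 + 2 * r * δ + a ^ 2) / (2 * a),
        Real.sqrt (((2 * r + δ) ^ 2 - a ^ 2) * (a ^ 2 - δ ^ 2)) / (2 * a)]) :
    ∀ q : EuclideanSpace ℝ (Fin 2),
      dist q t₁ ≤ r → dist q t₂ ≤ r → 2 * δ < ‖q‖ := by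
  intro q hq₁ hq₂
  have ha : 0 < a := by linarith
  exact lt_norm_of_dist_le_of_norm_add_lt hδ (by linarith) hq₁ hq₂
    (norm_eq_of_ofLp_eq_upper_intersection ha hδ.le (by linarith) (by linarith) ht₁)
    (norm_eq_of_ofLp_eq_lower_intersection ha.le (by linarith) ht₂)
    (norm_add_lt_of_ofLp_eq_intersections hδ hδa har ht₁ ht₂)

theorem stmt_2 (r a δ : ℝ) (hr : 0 < r) (ha : 0 < a) (har : a ≤ r / 2)
    (hδ : 0 < δ) (hδa : δ ≤ a / 4)
    (t₁ t₂ : EuclideanSpace ℝ (Fin 2))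
    (ht₂ : t₂ = ![a / 2, -Real.sqrt (4 * r ^ 2 - a ^ 2) / 2])
    (ht₁ : t₁ = ![(δ ^ 2 + 2 * r * δ + a ^ 2) / (2 * a),
        Real.sqrt (((2 * r + δ) ^ 2 - a ^ 2) * (a ^ 2 - δ ^ 2)) / (2 * a)]) :
    ∀ q : EuclideanSpace ℝ (Fin 2),
      dist q t₁ ≤ r → dist q t₂ ≤ r → 2 * δ < ‖q‖ :=
  stmt_2_general r a δ har hδ hδa t₁ t₂ ht₂ ht₁
end

section
/- Let r > 0 and let a satisfy 0 < a ≤ r/2. For j = 0, 1, …, 5 define q_j = (2a·cos(jπ/3), 2a·sin(jπ/3)) ∈ ℝ², i.e., 6 points placed uniformly on the circle of radius 2a centered at the origin. Then every point t ∈ ℝ² with ‖t‖ ≤ r + a satisfies dist(t, q_j) ≤ r for some j ∈ {0, …, 5}. In particular, 6 sensors of sensing radius r placed at distance 2a from a station cover the entire ring Ring(r, r + a) of points at distance between r and r + a from the station (and in fact the whole disk of radius r + a). -/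
/-!
Every `t ≠ 0` makes an angle at most `π / 6` with one of the six sensor positions `q`, so
`⟪t, q⟫ ≥ cos (π / 6) ‖t‖ ‖q‖`. Then `dist t q ^ 2 ≤ ‖t‖² - 2√3 a ‖t‖ + 4a²`, a convex function
of `‖t‖` which is at most `r²` at both ends `‖t‖ = 0` and `‖t‖ = r + a` as soon as `2a ≤ r`;
for this last step any angle `θ` with `cos θ ≥ 3 / 4` would do in place of `π / 6`.
-/

open Real

theorem dist_le_of_mul_norm_mul_norm_le_inner {E : Type*} [NormedAddCommGroup E]
    [InnerProductSpace ℝ E] {t q : E} {r a c : ℝ} (hc : 3 / 4 ≤ c) (hq : ‖q‖ = 2 * a)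
    (har : 2 * a ≤ r) (ht : ‖t‖ ≤ r + a) (hinner : c * (‖t‖ * ‖q‖) ≤ inner ℝ t q) :
    dist t q ≤ r := by
  have ha : 0 ≤ a := by linarith [norm_nonneg q]
  have hs := norm_nonneg t
  have hquad : ‖t‖ ^ 2 - 4 * c * a * ‖t‖ + 4 * a ^ 2 ≤ r ^ 2 := by
    nlinarith [mul_nonneg hs (sub_nonneg.2 ht), mul_nonneg (mul_nonneg ha hs) (sub_nonneg.2 hc),
      mul_nonneg (sub_nonneg.2 ht) (mul_nonneg ha (sub_nonneg.2 har)),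
      mul_nonneg hs (mul_nonneg ha (sub_nonneg.2 har))]
  have hsq : dist t q ^ 2 ≤ r ^ 2 := by
    rw [dist_eq_norm, norm_sub_sq_real, hq]
    rw [hq] at hinner
    linarith
  exact (abs_le_of_sq_le_sq' hsq (by linarith)).2

theorem exists_cos_pi_div_mul_le (n : ℕ) [NeZero n] (x y : ℝ) :
    ∃ j : Fin n, cos (π / n) * √(x ^ 2 + y ^ 2) ≤
      x * cos (2 * π * j / n) + y * sin (2 * π * j / n) := by
  have hn : (0 : ℝ) < n := Nat.cast_pos.2 (Nat.pos_of_neZero n)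
  set z : ℂ := ⟨x, y⟩
  set k : ℤ := round (z.arg / (2 * π / n))
  have hk : |z.arg - 2 * π * k / n| ≤ π / n := by
    have h := abs_sub_round (z.arg / (2 * π / n))
    rw [show z.arg - 2 * π * k / n = (2 * π / n) * (z.arg / (2 * π / n) - k) by
      field_simp, abs_mul, abs_of_pos (by positivity)]
    calc 2 * π / n * |z.arg / (2 * π / n) - k| ≤ 2 * π / n * (1 / 2) := by gcongr
      _ = π / n := by ring
  have hkn : 0 ≤ k % n := Int.emod_nonneg _ (by exact_mod_cast (NeZero.ne n))
  refine ⟨⟨(k % n).toNat, by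
    have := Int.emod_lt_of_pos k (by exact_mod_cast Nat.pos_of_neZero n : (0 : ℤ) < n); omega⟩, ?_⟩
  have hj : 2 * π * (((k % n).toNat : ℕ) : ℝ) / n = 2 * π * k / n - (k / n : ℤ) * (2 * π) := by
    rw [show (((k % n).toNat : ℕ) : ℝ) = ((k % n : ℤ) : ℝ) by exact_mod_cast Int.toNat_of_nonneg hkn,
      Int.emod_def]
    push_cast
    field_simp
  simp only [hj, cos_sub_int_mul_two_pi, sin_sub_int_mul_two_pi]
  have hx : x = ‖z‖ * cos z.arg := (Complex.norm_mul_cos_arg z).symm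
  have hy : y = ‖z‖ * sin z.arg := (Complex.norm_mul_sin_arg z).symm
  have hcos : cos (π / n) ≤ cos (z.arg - 2 * π * k / n) := by
    rw [← cos_abs (z.arg - _)]
    exact cos_le_cos_of_nonneg_of_le_pi (abs_nonneg _)
      (div_le_self pi_pos.le (by exact_mod_cast Nat.one_le_iff_ne_zero.2 (NeZero.ne n))) hk
  calc cos (π / n) * √(x ^ 2 + y ^ 2) = cos (π / n) * ‖z‖ := by
        rw [Complex.norm_eq_sqrt_sq_add_sq]
    _ ≤ cos (z.arg - 2 * π * k / n) * ‖z‖ := by gcongr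
    _ = x * cos (2 * π * k / n) + y * sin (2 * π * k / n) := by
        rw [hx, hy, cos_sub]; ring

theorem EuclideanSpace.norm_fin_two (t : EuclideanSpace ℝ (Fin 2)) :
    ‖t‖ = √(t 0 ^ 2 + t 1 ^ 2) := by
  simp [EuclideanSpace.norm_eq, Fin.sum_univ_two]

theorem EuclideanSpace.inner_fin_two (t q : EuclideanSpace ℝ (Fin 2)) :
    inner ℝ t q = t 0 * q 0 + t 1 * q 1 := by
  simp [EuclideanSpace.inner_eq_star_dotProduct, dotProduct, Fin.sum_univ_two, mul_comm]

theorem stmt_5_general (r a : ℝ) (ha : 0 < a) (har : a ≤ r / 2)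
    (q : Fin 6 → EuclideanSpace ℝ (Fin 2))
    (hq : ∀ j : Fin 6, q j = ![2 * a * Real.cos (j * Real.pi / 3),
        2 * a * Real.sin (j * Real.pi / 3)]) :
    ∀ t : EuclideanSpace ℝ (Fin 2), ‖t‖ ≤ r + a →
      ∃ j : Fin 6, dist t (q j) ≤ r := by
  intro t ht
  obtain ⟨j, hj⟩ := exists_cos_pi_div_mul_le 6 (t 0) (t 1)
  have hangle : (j : ℝ) * π / 3 = 2 * π * j / (6 : ℕ) := by push_cast; ring
  have hq0 : q j 0 = 2 * a * cos (2 * π * j / (6 : ℕ)) := by rw [hq j, ← hangle]; rfl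
  have hq1 : q j 1 = 2 * a * sin (2 * π * j / (6 : ℕ)) := by rw [hq j, ← hangle]; rfl
  have hnorm : ‖q j‖ = 2 * a := by
    have hsum : (2 * a * cos (2 * π * j / (6 : ℕ))) ^ 2 + (2 * a * sin (2 * π * j / (6 : ℕ))) ^ 2
        = (2 * a) ^ 2 := by
      linear_combination (2 * a) ^ 2 * cos_sq_add_sin_sq (2 * π * j / (6 : ℕ))
    rw [EuclideanSpace.norm_fin_two, hq0, hq1, hsum, sqrt_sq (by positivity)]
  refine ⟨j, dist_le_of_mul_norm_mul_norm_le_inner (c := cos (π / (6 : ℕ))) ?_ hnorm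
    (by linarith) ht ?_⟩
  · rw [Nat.cast_ofNat, cos_pi_div_six]
    nlinarith [sq_sqrt (show (0 : ℝ) ≤ 3 by norm_num), sqrt_nonneg 3]
  · rw [EuclideanSpace.inner_fin_two, hq0, hq1, hnorm, EuclideanSpace.norm_fin_two]
    linear_combination (2 * a) * hj

theorem stmt_5 (r a : ℝ) (hr : 0 < r) (ha : 0 < a) (har : a ≤ r / 2)
    (q : Fin 6 → EuclideanSpace ℝ (Fin 2))
    (hq : ∀ j : Fin 6, q j = ![2 * a * Real.cos (j * Real.pi / 3),
        2 * a * Real.sin (j * Real.pi / 3)]) :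
    ∀ t : EuclideanSpace ℝ (Fin 2), ‖t‖ ≤ r + a →
      ∃ j : Fin 6, dist t (q j) ≤ r :=
  stmt_5_general r a ha har q hq
end

section
/- Let p ∈ P be a station and let a be a real number with 0 < a ≤ r/2. If S is an optimal solution, then the number of sensors s ∈ S such that a/2 ≤ dist(s, p) ≤ a and p is a nearest station to s (i.e., dist(s, p) ≤ dist(s, p') for all p' ∈ P) is at most 24. -/
/-- The set of points covered by a finite set `S` of sensors with sensing
radius `r` includes every target: for each `t ∈ T` there is `s ∈ S` with
`dist s t ≤ r`. -/
def Covers (r : ℝ) (T : Set (EuclideanSpace ℝ (Fin 2)))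
    (S : Finset (EuclideanSpace ℝ (Fin 2))) : Prop :=
  ∀ t ∈ T, ∃ s ∈ S, dist s t ≤ r

/-- The total moving cost of a sensor set `S`: each sensor moves from its
nearest station in `P`. -/
noncomputable def cost (P S : Finset (EuclideanSpace ℝ (Fin 2))) : ℝ :=
  ∑ s ∈ S, Metric.infDist s (P : Set (EuclideanSpace ℝ (Fin 2)))

/-- `S` is an optimal solution: it covers `T` and has minimum cost among all
finite sensor sets covering `T`. -/
def Optimal (r : ℝ) (P : Finset (EuclideanSpace ℝ (Fin 2)))
    (T : Set (EuclideanSpace ℝ (Fin 2)))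
    (S : Finset (EuclideanSpace ℝ (Fin 2))) : Prop :=
  Covers r T S ∧
    ∀ S' : Finset (EuclideanSpace ℝ (Fin 2)), Covers r T S' → cost P S ≤ cost P S'

/-! Replace the counted sensors, each of which costs at least `a / 2` because `p` is a nearest
station, by six sensors at the vertices of the regular hexagon of circumradius `2a` about `p`,
which cost at most `12a` in total. A target seen by a removed sensor lies within `r + a` of `p`,
and since `a ≤ r / 2` the six disks of radius `r` about the vertices cover that disk: every
direction is within `π / 6` of a vertex. Optimality then gives `N · a / 2 ≤ 12a`. -/

open Complex Real ComplexConjugate Polynomial Finset Module Metric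
open scoped InnerProductSpace

theorem Complex.re_mul_conj_exp (z : ℂ) (φ : ℝ) :
    (z * conj (exp (φ * I))).re = ‖z‖ * Real.cos (arg z - φ) := by
  conv_lhs => rw [← norm_mul_exp_arg_mul_I z]
  rw [← Complex.exp_conj, mul_assoc, ← Complex.exp_add, map_mul, conj_ofReal, conj_I,
    re_ofReal_mul, show (arg z : ℂ) * I + φ * -I = ((arg z - φ : ℝ) : ℂ) * I by push_cast; ring,
    exp_ofReal_mul_I_re]

theorem Complex.exists_mem_nthRootsFinset_six_inner_ge (z : ℂ) :
    ∃ u ∈ nthRootsFinset 6 (1 : ℂ), √3 / 2 * ‖z‖ ≤ ⟪u, z⟫_ℝ := by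
  set k := round (arg z / (π / 3))
  refine ⟨exp ((k * (π / 3) : ℝ) * I), ?_, ?_⟩
  · rw [mem_nthRootsFinset (by norm_num), ← Complex.exp_nat_mul,
      ← Complex.exp_int_mul_two_pi_mul_I k]
    push_cast; ring_nf
  · have hk : |arg z - k * (π / 3)| ≤ π / 6 :=
      calc |arg z - k * (π / 3)| = |(arg z / (π / 3) - k) * (π / 3)| := by congr 1; field_simp
        _ = |arg z / (π / 3) - k| * (π / 3) := by
          rw [abs_mul, abs_of_pos (by positivity : 0 < π / 3)]
        _ ≤ 1 / 2 * (π / 3) := by gcongr; exact abs_sub_round _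
        _ = π / 6 := by ring
    rw [Complex.inner, re_mul_conj_exp, ← cos_pi_div_six, mul_comm, ← cos_abs (arg z - _)]
    gcongr
    exact cos_le_cos_of_nonneg_of_le_pi (abs_nonneg _) (by linarith [pi_pos]) hk

section InnerProductSpace

variable {E : Type*} [NormedAddCommGroup E] [InnerProductSpace ℝ E]

theorem exists_six_unit_vectors_of_finrank_eq_two [FiniteDimensional ℝ E] (hE : finrank ℝ E = 2) :
    ∃ U : Finset E, #U ≤ 6 ∧ (∀ u ∈ U, ‖u‖ = 1) ∧ ∀ v, ∃ u ∈ U, √3 / 2 * ‖v‖ ≤ ⟪u, v⟫_ℝ := by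
  classical
  let f : ℂ ≃ₗᵢ[ℝ] E := Complex.orthonormalBasisOneI.equiv
    ((stdOrthonormalBasis ℝ E).reindex (finCongr hE)) (Equiv.refl _)
  refine ⟨(nthRootsFinset 6 (1 : ℂ)).image f, ?_, ?_, fun v ↦ ?_⟩
  · exact card_image_le.trans (Multiset.toFinset_card_le _ |>.trans (card_nthRoots 6 1))
  · simp only [mem_image, forall_exists_index, and_imp]
    rintro _ z hz rfl
    rw [LinearIsometryEquiv.norm_map]
    exact norm_eq_one_of_pow_eq_one ((mem_nthRootsFinset (by norm_num) 1).1 hz) (by norm_num)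
  · obtain ⟨u, hu, huv⟩ := (f.symm v).exists_mem_nthRootsFinset_six_inner_ge
    refine ⟨f u, mem_image_of_mem _ hu, ?_⟩
    rwa [← f.norm_map, ← f.inner_map_map, f.apply_symm_apply] at huv

/-- `‖v - 2a • u‖² ≤ d² - 2√3·a·d + 4a²` with `d = ‖v‖`; the right side is convex in `d` and at
most `r²` at both ends `d = 0` and `d = r + a`. -/
theorem norm_sub_two_smul_le {u v : E} {a r : ℝ} (hu : ‖u‖ = 1) (huv : √3 / 2 * ‖v‖ ≤ ⟪u, v⟫_ℝ)
    (ha : 0 ≤ a) (har : a ≤ r / 2) (hv : ‖v‖ ≤ r + a) : ‖v - (2 * a) • u‖ ≤ r := by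
  have hsqrt3 : 3 / 2 ≤ √3 := by nlinarith [sqrt_nonneg 3, sq_sqrt (by norm_num : (0 : ℝ) ≤ 3)]
  have hsq : ‖v - (2 * a) • u‖ ^ 2 = ‖v‖ ^ 2 - 4 * a * ⟪u, v⟫_ℝ + 4 * a ^ 2 := by
    rw [norm_sub_sq_real, real_inner_smul_right, norm_smul, hu, real_inner_comm,
      Real.norm_of_nonneg (by positivity)]
    ring
  set d := ‖v‖
  have hd : d ^ 2 ≤ (r + a) * d := by nlinarith [norm_nonneg v]
  have hg : (r + a) * d - 2 * √3 * a * d + 4 * a ^ 2 ≤ r ^ 2 := by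
    rcases le_total (2 * √3 * a) (r + a) with h | h
    · nlinarith [mul_le_mul_of_nonneg_left hv (by linarith : 0 ≤ r + a - 2 * √3 * a),
        mul_le_mul_of_nonneg_left hsqrt3 (mul_nonneg ha (by linarith) : 0 ≤ a * (r + a))]
    · nlinarith [mul_le_mul_of_nonneg_left (norm_nonneg v) (by linarith : 0 ≤ 2 * √3 * a - (r + a))]
  refine abs_le_of_sq_le_sq' ?_ ?_ |>.2 <;> nlinarith [mul_le_mul_of_nonneg_left huv ha]

theorem closedBall_subset_biUnion_closedBall_two_smul {U : Finset E} (hU : ∀ u ∈ U, ‖u‖ = 1)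
    (hUv : ∀ v, ∃ u ∈ U, √3 / 2 * ‖v‖ ≤ ⟪u, v⟫_ℝ) {a r : ℝ} (ha : 0 ≤ a) (har : a ≤ r / 2)
    (p : E) : closedBall p (r + a) ⊆ ⋃ u ∈ U, closedBall (p + (2 * a) • u) r := by
  intro t ht
  obtain ⟨u, hu, htu⟩ := hUv (t - p)
  refine Set.mem_iUnion₂.2 ⟨u, hu, ?_⟩
  rw [mem_closedBall, dist_eq_norm, show t - (p + (2 * a) • u) = t - p - (2 * a) • u by abel]
  exact norm_sub_two_smul_le (hU u hu) htu ha har (mem_closedBall_iff_norm.1 ht)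

end InnerProductSpace

section Cost

variable {P S : Finset (EuclideanSpace ℝ (Fin 2))}

theorem cost_union_le [DecidableEq (EuclideanSpace ℝ (Fin 2))]
    (A B : Finset (EuclideanSpace ℝ (Fin 2))) :
    cost P (A ∪ B) ≤ cost P A + cost P B := by
  rw [cost, cost, cost, ← sum_union_inter]
  exact le_add_of_nonneg_right (sum_nonneg fun _ _ ↦ infDist_nonneg)

theorem cost_le_card_mul {p : EuclideanSpace ℝ (Fin 2)} {c : ℝ} (hp : p ∈ P)
    (h : ∀ s ∈ S, dist s p ≤ c) : cost P S ≤ #S * c := by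
  rw [← nsmul_eq_mul]
  exact sum_le_card_nsmul _ _ _ fun s hs ↦ (infDist_le_dist_of_mem (by simpa)).trans (h s hs)

theorem card_mul_le_cost {c : ℝ} (hP : P.Nonempty) (h : ∀ s ∈ S, ∀ p ∈ P, c ≤ dist s p) :
    #S * c ≤ cost P S := by
  rw [← nsmul_eq_mul]
  exact card_nsmul_le_sum _ _ _ fun s hs ↦
    (le_infDist (by simpa)).2 fun p hp ↦ h s hs p (by simpa using hp)

end Cost

theorem Covers.sdiff_union [DecidableEq (EuclideanSpace ℝ (Fin 2))] {r : ℝ}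
    {T : Set (EuclideanSpace ℝ (Fin 2))} {S K H : Finset (EuclideanSpace ℝ (Fin 2))}
    (hS : Covers r T S) (hK : ∀ s ∈ K, ∀ t ∈ T, dist s t ≤ r → ∃ h ∈ H, dist h t ≤ r) :
    Covers r T (S \ K ∪ H) := by
  intro t ht
  obtain ⟨s, hs, hst⟩ := hS t ht
  by_cases hsK : s ∈ K
  · obtain ⟨h, hh, hht⟩ := hK s hsK t ht hst
    exact ⟨h, mem_union_right _ hh, hht⟩
  · exact ⟨s, mem_union_left _ (mem_sdiff.2 ⟨hs, hsK⟩), hst⟩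

theorem stmt_6_general (r : ℝ)
    (P : Finset (EuclideanSpace ℝ (Fin 2)))
    (T : Set (EuclideanSpace ℝ (Fin 2)))
    (S : Finset (EuclideanSpace ℝ (Fin 2))) (hopt : Optimal r P T S)
    (p : EuclideanSpace ℝ (Fin 2)) (hp : p ∈ P)
    (a : ℝ) (ha : 0 < a) (har : a ≤ r / 2) :
    {s : EuclideanSpace ℝ (Fin 2) | s ∈ S ∧
        a / 2 ≤ dist s p ∧ dist s p ≤ a ∧
        ∀ p' ∈ P, dist s p ≤ dist s p'}.ncard ≤ 24 := by
  classical
  set K := S.filter fun s ↦ a / 2 ≤ dist s p ∧ dist s p ≤ a ∧ ∀ p' ∈ P, dist s p ≤ dist s p'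
  obtain ⟨U, hU6, hU1, hUv⟩ :=
    exists_six_unit_vectors_of_finrank_eq_two (finrank_euclideanSpace_fin (n := 2))
  set H := U.image fun u ↦ p + (2 * a) • u
  have hcov : Covers r T (S \ K ∪ H) := hopt.1.sdiff_union fun s hs t _ hst ↦ by
    have htp : dist t p ≤ r + a := by
      linarith [dist_triangle t s p, dist_comm s t, (mem_filter.1 hs).2.2.1]
    simpa [H, dist_comm t] using closedBall_subset_biUnion_closedBall_two_smul hU1 hUv ha.le har p
      (mem_closedBall.2 htp)
  have hK : #K * (a / 2) ≤ cost P K := card_mul_le_cost ⟨p, hp⟩ fun s hs p' hp' ↦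
    (mem_filter.1 hs).2.1.trans ((mem_filter.1 hs).2.2.2 p' hp')
  have hH : cost P H ≤ 6 * (2 * a) := by
    refine (cost_le_card_mul hp fun h hh ↦ ?_).trans
      (by gcongr; exact_mod_cast card_image_le.trans hU6)
    obtain ⟨u, hu, rfl⟩ := mem_image.1 hh
    rw [dist_self_add_left, norm_smul, hU1 u hu, Real.norm_of_nonneg (by positivity), mul_one]
  have hsplit : cost P (S \ K) + cost P K = cost P S := sum_sdiff (filter_subset _ _)
  have hcost := (hopt.2 _ hcov).trans (cost_union_le _ _)
  have hcard : (#K : ℝ) ≤ 24 := by nlinarith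
  rw [show {s | s ∈ S ∧ _} = (K : Set _) by ext; simp [K], Set.ncard_coe_finset]
  exact_mod_cast hcard

theorem stmt_6 (r : ℝ) (hr : 0 < r)
    (P : Finset (EuclideanSpace ℝ (Fin 2))) (hP : P.Nonempty)
    (T : Set (EuclideanSpace ℝ (Fin 2)))
    (S : Finset (EuclideanSpace ℝ (Fin 2))) (hopt : Optimal r P T S)
    (p : EuclideanSpace ℝ (Fin 2)) (hp : p ∈ P)
    (a : ℝ) (ha : 0 < a) (har : a ≤ r / 2) :
    {s : EuclideanSpace ℝ (Fin 2) | s ∈ S ∧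
        a / 2 ≤ dist s p ∧ dist s p ≤ a ∧
        ∀ p' ∈ P, dist s p ≤ dist s p'}.ncard ≤ 24 :=
  stmt_6_general r P T S hopt p hp a ha har
end

section
/- Let r > 0, let m ≥ 2 be a natural number, and let c ∈ ℝ. Then the number of shift indices f ∈ {0, 1, …, m−1} for which there exists an integer j with c ≤ 2r·(m·j + f) ≤ c + 2r is at most 2. -/
theorem stmt_12 (r : ℝ) (hr : 0 < r) (m : ℕ) (hm : 2 ≤ m) (c : ℝ) :
    {f : ℕ | f < m ∧ ∃ j : ℤ,
        c ≤ 2 * r * ((m : ℝ) * (j : ℝ) + (f : ℝ)) ∧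
        2 * r * ((m : ℝ) * (j : ℝ) + (f : ℝ)) ≤ c + 2 * r}.ncard ≤ 2 := by
  have h2r : (0:ℝ) < 2*r := by linarith
  set a := c / (2*r) with ha
  have hsub : {f : ℕ | f < m ∧ ∃ j : ℤ,
        c ≤ 2 * r * ((m : ℝ) * (j : ℝ) + (f : ℝ)) ∧
        2 * r * ((m : ℝ) * (j : ℝ) + (f : ℝ)) ≤ c + 2 * r} ⊆
      {(⌈a⌉ % (m:ℤ)).toNat, ((⌊a⌋ + 1) % (m:ℤ)).toNat} := by
    rintro f ⟨hfm, j, h1, h2⟩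
    set n : ℤ := (m:ℤ) * j + (f:ℤ) with hn
    have hcast : ((n:ℤ) : ℝ) = (m : ℝ) * (j : ℝ) + (f : ℝ) := by rw [hn]; push_cast; ring
    have hna : a ≤ (n:ℝ) := by
      rw [ha, div_le_iff₀ h2r, hcast]; nlinarith
    have hna2 : (n:ℝ) - 1 ≤ a := by
      rw [ha, le_div_iff₀ h2r, hcast]; nlinarith
    have h3 : ⌈a⌉ ≤ n := Int.ceil_le.mpr hna
    have h4 : n - 1 ≤ ⌊a⌋ := Int.le_floor.mpr (by push_cast; linarith)
    have h5 : ⌊a⌋ ≤ ⌈a⌉ := Int.floor_le_ceil a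
    have h6 : ⌈a⌉ ≤ ⌊a⌋ + 1 := Int.ceil_le_floor_add_one a
    have hcases : n = ⌈a⌉ ∨ n = ⌊a⌋ + 1 := by omega
    have hfm' : (f:ℤ) < (m:ℤ) := by exact_mod_cast hfm
    have hm0 : (0:ℤ) < (m:ℤ) := by positivity
    have hmod : n % (m:ℤ) = (f:ℤ) := by
      rw [hn, add_comm, Int.add_mul_emod_self_left, Int.emod_eq_of_lt (by positivity) hfm']
    have hfn : f = (n % (m:ℤ)).toNat := by omega
    rcases hcases with h | h <;> simp [hfn, h]
  have hfin : ({(⌈a⌉ % (m:ℤ)).toNat, ((⌊a⌋ + 1) % (m:ℤ)).toNat} : Set ℕ).Finite :=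
    (Set.finite_singleton _).insert _
  calc _ ≤ ({(⌈a⌉ % (m:ℤ)).toNat, ((⌊a⌋ + 1) % (m:ℤ)).toNat} : Set ℕ).ncard :=
        Set.ncard_le_ncard hsub hfin
    _ ≤ ({((⌊a⌋ + 1) % (m:ℤ)).toNat} : Set ℕ).ncard + 1 := Set.ncard_insert_le _ _
    _ ≤ 2 := by rw [Set.ncard_singleton]
end

section
/- Let r > 0, let m ≥ 2 be a natural number, and let z = (z₁, z₂) ∈ ℝ². Then the number of shift indices f ∈ {0, 1, …, m−1} such that (there exists an integer j with |z₁ − 2r·(m·j + f)| ≤ r) or (there exists an integer j with |z₂ − 2r·(m·j + f)| ≤ r) is at most 4. Equivalently, a closed disk of radius r centered at z intersects a grid line of the shifted grid with cells of side 2mr and offset (2fr, 2fr) for at most 4 of the m shifts. -/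
theorem stmt_13 (r : ℝ) (hr : 0 < r) (m : ℕ) (hm : 2 ≤ m)
    (z : EuclideanSpace ℝ (Fin 2)) :
    {f : ℕ | f < m ∧
        ((∃ j : ℤ, |z 0 - 2 * r * ((m : ℝ) * (j : ℝ) + (f : ℝ))| ≤ r) ∨
         (∃ j : ℤ, |z 1 - 2 * r * ((m : ℝ) * (j : ℝ) + (f : ℝ))| ≤ r))}.ncard
      ≤ 4 := by
  have hm0 : (0:ℤ) < (m:ℤ) := by exact_mod_cast Nat.lt_of_lt_of_le (by norm_num) hm
  have h2r : (0:ℝ) < 2*r := by linarith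
  have key : ∀ w : ℝ, ∀ f : ℕ, f < m →
      (∃ j : ℤ, |w - 2 * r * ((m : ℝ) * (j : ℝ) + (f : ℝ))| ≤ r) →
      f = (⌊w/(2*r) + 1/2⌋ % (m:ℤ)).toNat ∨
      f = ((⌊w/(2*r) + 1/2⌋ - 1) % (m:ℤ)).toNat := by
    rintro w f hf ⟨j, hj⟩
    set a := ⌊w/(2*r) + 1/2⌋ with ha
    set n : ℤ := (f:ℤ) + (m:ℤ) * j with hn
    rw [abs_le] at hj
    have hcast : ((n:ℤ):ℝ) = (f : ℝ) + (m : ℝ) * (j : ℝ) := by norm_cast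
    have hub : (n:ℝ) ≤ w/(2*r) + 1/2 := by
      rw [← sub_le_iff_le_add, le_div_iff₀ h2r]
      nlinarith [hj.2]
    have hlb : w/(2*r) - 1/2 ≤ (n:ℝ) := by
      rw [sub_le_iff_le_add, div_le_iff₀ h2r]
      nlinarith [hj.1]
    have hna : n ≤ a := Int.le_floor.mpr hub
    have hfl : (a:ℝ) ≤ w/(2*r) + 1/2 := Int.floor_le _
    have hna2 : a - 1 ≤ n := by
      have : ((a:ℝ)) - 1 ≤ (n:ℝ) := by linarith
      exact_mod_cast this
    have hmod : n % (m:ℤ) = (f:ℤ) := by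
      rw [hn, Int.add_mul_emod_self_left, Int.emod_eq_of_lt (by positivity)
        (by exact_mod_cast hf)]
    have hfn : f = (n % (m:ℤ)).toNat := by rw [hmod]; simp
    rcases (by omega : n = a ∨ n = a - 1) with h | h
    · left; rw [hfn, h]
    · right; rw [hfn, h]
  set A := (⌊z 0/(2*r) + 1/2⌋ % (m:ℤ)).toNat
  set B := ((⌊z 0/(2*r) + 1/2⌋ - 1) % (m:ℤ)).toNat
  set C := (⌊z 1/(2*r) + 1/2⌋ % (m:ℤ)).toNat
  set D := ((⌊z 1/(2*r) + 1/2⌋ - 1) % (m:ℤ)).toNat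
  have hsub : {f : ℕ | f < m ∧
        ((∃ j : ℤ, |z 0 - 2 * r * ((m : ℝ) * (j : ℝ) + (f : ℝ))| ≤ r) ∨
         (∃ j : ℤ, |z 1 - 2 * r * ((m : ℝ) * (j : ℝ) + (f : ℝ))| ≤ r))}
      ⊆ ({A, B, C, D} : Set ℕ) := by
    rintro f ⟨hf, h | h⟩
    · rcases key (z 0) f hf h with h' | h' <;> simp [h', A, B]
    · rcases key (z 1) f hf h with h' | h' <;> simp [h', C, D]
  refine le_trans (Set.ncard_le_ncard hsub (Set.toFinite _)) ?_
  have h1 := Set.ncard_insert_le A ({B, C, D} : Set ℕ)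
  have h2 := Set.ncard_insert_le B ({C, D} : Set ℕ)
  have h3 := Set.ncard_insert_le C ({D} : Set ℕ)
  simp [Set.ncard_singleton] at *
  omega
end

section
/- Let r > 0 and set w = r/√2. Let q = [0, w] × [0, w] ⊆ ℝ². Then every point t ∈ ℝ² for which there exists u ∈ q with dist(t, u) ≤ r lies in one of the 21 closed squares [i·w, (i+1)·w] × [j·w, (j+1)·w] with integers −2 ≤ i, j ≤ 2 and not (|i| = 2 and |j| = 2); that is, t lies in the 5×5 block of side-w squares centered at q with the four corner squares removed. -/
lemma pick_idx (w x : ℝ) (hlo : -2*w ≤ x) (hhi : x ≤ 3*w) :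
    ∃ i : ℤ, -2 ≤ i ∧ i ≤ 2 ∧ (i:ℝ)*w ≤ x ∧ x ≤ ((i:ℝ)+1)*w ∧
      (i = 2 → 2*w < x) ∧ (i = -2 → x < -w) := by
  rcases lt_or_ge (2*w) x with h | h
  · exact ⟨2, by norm_num, by norm_num, by push_cast; linarith, by push_cast; linarith,
      fun _ => h, by norm_num⟩
  rcases le_or_gt w x with h1 | h1
  · exact ⟨1, by norm_num, by norm_num, by push_cast; linarith, by push_cast; linarith,
      by norm_num, by norm_num⟩
  rcases le_or_gt 0 x with h2 | h2
  · exact ⟨0, by norm_num, by norm_num, by push_cast; linarith, by push_cast; linarith,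
      by norm_num, by norm_num⟩
  rcases le_or_gt (-w) x with h3 | h3
  · exact ⟨-1, by norm_num, by norm_num, by push_cast; linarith, by push_cast; linarith,
      by norm_num, by norm_num⟩
  · exact ⟨-2, by norm_num, by norm_num, by push_cast; linarith, by push_cast; linarith,
      by norm_num, fun _ => h3⟩

theorem stmt_15 (r : ℝ) (hr : 0 < r) (w : ℝ) (hw : w = r / Real.sqrt 2) :
    ∀ t : EuclideanSpace ℝ (Fin 2),
      (∃ u : EuclideanSpace ℝ (Fin 2),
          u 0 ∈ Set.Icc 0 w ∧ u 1 ∈ Set.Icc 0 w ∧ dist t u ≤ r) →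
      ∃ i j : ℤ, -2 ≤ i ∧ i ≤ 2 ∧ -2 ≤ j ∧ j ≤ 2 ∧ ¬(|i| = 2 ∧ |j| = 2) ∧
        t 0 ∈ Set.Icc ((i : ℝ) * w) (((i : ℝ) + 1) * w) ∧
        t 1 ∈ Set.Icc ((j : ℝ) * w) (((j : ℝ) + 1) * w) := by
  intro t ⟨u, ⟨hu00, hu01⟩, ⟨hu10, hu11⟩, hd⟩
  have hs2 : Real.sqrt 2 ^ 2 = 2 := Real.sq_sqrt (by norm_num)
  have hs2pos : 0 < Real.sqrt 2 := Real.sqrt_pos.mpr (by norm_num)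
  have hwpos : 0 < w := by rw [hw]; positivity
  have hr2 : r ^ 2 = 2 * w ^ 2 := by
    rw [hw, div_pow, hs2]; ring
  have hS : (t 0 - u 0) ^ 2 + (t 1 - u 1) ^ 2 ≤ r ^ 2 := by
    have hde : dist t u = Real.sqrt ((t 0 - u 0) ^ 2 + (t 1 - u 1) ^ 2) := by
      rw [EuclideanSpace.dist_eq, Fin.sum_univ_two]
      simp [Real.dist_eq, sq_abs]
    have hnn : (0:ℝ) ≤ (t 0 - u 0) ^ 2 + (t 1 - u 1) ^ 2 := by positivity
    have := Real.sq_sqrt hnn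
    nlinarith [Real.sqrt_nonneg ((t 0 - u 0) ^ 2 + (t 1 - u 1) ^ 2), hde ▸ hd]
  have hsqrt2le : Real.sqrt 2 ≤ 2 := by nlinarith
  have hrw : r = Real.sqrt 2 * w := by rw [hw]; field_simp
  have hr3 : r ≤ 2 * w := by rw [hrw]; nlinarith
  have h0lo : -2*w ≤ t 0 := by nlinarith [sq_nonneg (t 1 - u 1), sq_nonneg (t 0 - u 0 + r)]
  have h0hi : t 0 ≤ 3*w := by nlinarith [sq_nonneg (t 1 - u 1), sq_nonneg (t 0 - u 0 - r)]
  have h1lo : -2*w ≤ t 1 := by nlinarith [sq_nonneg (t 0 - u 0), sq_nonneg (t 1 - u 1 + r)]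
  have h1hi : t 1 ≤ 3*w := by nlinarith [sq_nonneg (t 0 - u 0), sq_nonneg (t 1 - u 1 - r)]
  obtain ⟨i, hi1, hi2, hi3, hi4, hi5, hi6⟩ := pick_idx w (t 0) h0lo h0hi
  obtain ⟨j, hj1, hj2, hj3, hj4, hj5, hj6⟩ := pick_idx w (t 1) h1lo h1hi
  refine ⟨i, j, hi1, hi2, hj1, hj2, ?_, ⟨hi3, hi4⟩, ⟨hj3, hj4⟩⟩
  rintro ⟨hai, haj⟩
  have hx : w < |t 0 - u 0| := by
    rcases abs_eq (by norm_num : (0:ℤ) ≤ 2) |>.mp hai with h | h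
    · have := hi5 h; rw [abs_of_pos (by linarith)]; linarith
    · have := hi6 h; rw [abs_of_neg (by linarith)]; linarith
  have hy : w < |t 1 - u 1| := by
    rcases abs_eq (by norm_num : (0:ℤ) ≤ 2) |>.mp haj with h | h
    · have := hj5 h; rw [abs_of_pos (by linarith)]; linarith
    · have := hj6 h; rw [abs_of_neg (by linarith)]; linarith
  have hax : w ^ 2 < (t 0 - u 0) ^ 2 := by
    have := pow_lt_pow_left₀ hx hwpos.le (two_ne_zero); rwa [sq_abs] at this
  have hay : w ^ 2 < (t 1 - u 1) ^ 2 := by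
    have := pow_lt_pow_left₀ hy hwpos.le (two_ne_zero); rwa [sq_abs] at this
  nlinarith
end
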